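/- (Dissipativity of quantized consensus.) Let n ∈ ℕ, let w ∈ ℝ^{n×n} be symmetric with nonnegative entries (w_{ij} = w_{ji} ≥ 0), let q : ℝ → ℝ be monotonically non-decreasing, and let x ∈ ℝ^n. Then Σ_{i=1}^n x_i · Σ_{j=1}^n w_{ij}·(q(x_j) − q(x_i)) ≤ 0. -/

import Mathlib

/-!
Swapping `i` and `j` and using the symmetry of `w`, twice the sum equals
`-Σ_{i,j} w_{ij} (q(x_j) - q(x_i)) (x_j - x_i)`, and every term of this double sum is
nonnegative because a monotone `q` moves in the same direction as its argument.
-/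

open Finset

section

variable {ι R : Type*} [Fintype ι]

theorem two_mul_sum_mul_sum_sub_eq_neg_sum_sum [CommRing R] {w : ι → ι → R}
    (hw : ∀ i j, w i j = w j i) (x y : ι → R) :
    2 * ∑ i, x i * ∑ j, w i j * (y j - y i) =
      -∑ i, ∑ j, w i j * ((y j - y i) * (x j - x i)) := by
  have hswap : ∑ i, x i * ∑ j, w i j * (y j - y i) =
      ∑ i, ∑ j, x j * (w i j * (y i - y j)) := by
    simp only [mul_sum]
    rw [sum_comm]
    simp only [hw]
  calc 2 * ∑ i, x i * ∑ j, w i j * (y j - y i)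
      = ∑ i, x i * ∑ j, w i j * (y j - y i) + ∑ i, ∑ j, x j * (w i j * (y i - y j)) := by
        rw [← hswap, two_mul]
    _ = -∑ i, ∑ j, w i j * ((y j - y i) * (x j - x i)) := by
        simp only [mul_sum, ← sum_add_distrib, ← sum_neg_distrib]
        refine sum_congr rfl fun i _ => sum_congr rfl fun j _ => ?_
        ring

theorem sum_mul_sum_sub_nonpos_of_monovary [CommRing R] [LinearOrder R] [IsStrictOrderedRing R]
    {w : ι → ι → R} (hw : ∀ i j, w i j = w j i) (hw0 : ∀ i j, 0 ≤ w i j) {x y : ι → R}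
    (hxy : Monovary y x) :
    ∑ i, x i * ∑ j, w i j * (y j - y i) ≤ 0 := by
  have hterms : 0 ≤ ∑ i, ∑ j, w i j * ((y j - y i) * (x j - x i)) :=
    sum_nonneg fun i _ => sum_nonneg fun j _ => mul_nonneg (hw0 i j) (hxy.sub_mul_sub_nonneg i j)
  have htwice := two_mul_sum_mul_sum_sub_eq_neg_sum_sum hw x y
  linarith

end

/-- **Dissipativity of quantized consensus.** For a symmetric matrix `w` with nonnegative
entries and a monotonically non-decreasing `q : ℝ → ℝ`,
`Σ_i x_i · Σ_j w_{ij}·(q(x_j) − q(x_i)) ≤ 0`. -/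
theorem quantized_consensus_dissipative (n : ℕ) (w : Fin n → Fin n → ℝ)
    (hw : ∀ i j, w i j = w j i) (hw0 : ∀ i j, 0 ≤ w i j)
    (q : ℝ → ℝ) (hq : Monotone q) (x : Fin n → ℝ) :
    ∑ i, x i * ∑ j, w i j * (q (x j) - q (x i)) ≤ 0 :=
  sum_mul_sum_sub_nonpos_of_monovary hw hw0 ((monovary_self x).comp_monotone_left hq)
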